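/- Let Ω ⊆ ℝⁿ be measurable, let p : Ω → [1,∞) be bounded measurable, let r : Ω → ℝ be bounded measurable with r(x) < 0 for all x ∈ Ω, and let a ∈ L^∞(Ω) with a ≥ 0. Then for every measurable set A ⊆ Ω with 0 < |A| < ∞: min{ |A|^{1/p⁺_A}, |A|^{1/p⁻_A} } ≤ ‖1_A‖_{L^Φ(Ω)} ≤ 2 (1+‖a‖_∞)^{1/p⁻_A} · max{ |A|^{1/p⁺_A}, |A|^{1/p⁻_A} }. -/

import Mathlib

/-!
Since `r < 0` and `log (e + t) ≥ 1`, the logarithmic factor is at most `1`, so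
`t ^ p(x) ≤ Φ(x, t) ≤ (1 + ‖a‖_∞) t ^ p(x)` for `t ≥ 0`; moreover `Φ(x, 0) = 0`, so the modular
of `1_A / λ` is `∫_A Φ(x, 1/λ) dx`. For `x ∈ A` the power `λ ^ (-p(x))` lies between the smaller
and the larger of `λ ^ (-p⁺_A)` and `λ ^ (-p⁻_A)`, and solving `|A| λ ^ (-q) ≤ 1` for `λ` gives
both bounds.
-/

open MeasureTheory Set
open scoped ENNReal

/-- The function `Φ(x,t) = t^{p(x)} + a(x) t^{p(x)} (log(e+t))^{r(x)}`. -/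
noncomputable def Phi2 {n : ℕ} (p r a : EuclideanSpace ℝ (Fin n) → ℝ)
    (x : EuclideanSpace ℝ (Fin n)) (t : ℝ) : ℝ :=
  t ^ p x + a x * t ^ p x * (Real.log (Real.exp 1 + t)) ^ r x

/-- The Luxemburg (quasi-)norm `‖u‖_{L^Φ(Ω)} = inf{λ > 0 : ∫_Ω Φ(x,|u(x)|/λ) dx ≤ 1}`,
valued in `ℝ≥0∞`, with `inf ∅ = ∞`. -/
noncomputable def luxNorm {n : ℕ} (Ω : Set (EuclideanSpace ℝ (Fin n)))
    (Φ : EuclideanSpace ℝ (Fin n) → ℝ → ℝ)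
    (u : EuclideanSpace ℝ (Fin n) → ℝ) : ℝ≥0∞ :=
  sInf ((fun l : ℝ => ENNReal.ofReal l) ''
    {l : ℝ | 0 < l ∧ (∫⁻ x in Ω, ENNReal.ofReal (Φ x (|u x| / l))) ≤ 1})

theorem min_rpow_le_rpow_of_le_of_le {t a b c : ℝ} (ht : 0 < t) (hab : a ≤ b) (hbc : b ≤ c) :
    min (t ^ c) (t ^ a) ≤ t ^ b := by
  rcases le_total t 1 with ht1 | ht1
  · exact min_le_of_left_le (Real.rpow_le_rpow_of_exponent_ge ht ht1 hbc)
  · exact min_le_of_right_le (Real.rpow_le_rpow_of_exponent_le ht1 hab)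

theorem rpow_le_max_rpow_of_le_of_le {t a b c : ℝ} (ht : 0 < t) (hab : a ≤ b) (hbc : b ≤ c) :
    t ^ b ≤ max (t ^ c) (t ^ a) := by
  rcases le_total t 1 with ht1 | ht1
  · exact le_max_of_le_right (Real.rpow_le_rpow_of_exponent_ge ht ht1 hab)
  · exact le_max_of_le_left (Real.rpow_le_rpow_of_exponent_le ht1 hbc)

theorem one_div_rpow_mul_le_one_iff {l q m : ℝ} (hl : 0 < l) :
    (1 / l) ^ q * m ≤ 1 ↔ m ≤ l ^ q := by
  rw [one_div, Real.inv_rpow hl.le, inv_mul_le_iff₀ (Real.rpow_pos_of_pos hl q), mul_one]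

theorem rpow_one_div_le_of_one_div_rpow_mul_le_one {l q m : ℝ} (hl : 0 < l) (hq : 0 < q)
    (hm : 0 ≤ m) (h : (1 / l) ^ q * m ≤ 1) : m ^ (1 / q) ≤ l := by
  rw [one_div, Real.rpow_inv_le_iff_of_pos hm hl.le hq]
  exact (one_div_rpow_mul_le_one_iff hl).1 h

theorem mul_le_rpow_mul_rpow {c m M pMin q : ℝ} (hc : 1 ≤ c) (hm : 0 ≤ m) (hpMin : 0 < pMin)
    (hpMinq : pMin ≤ q) (hmM : m ^ (1 / q) ≤ M) : c * m ≤ (c ^ (1 / pMin) * M) ^ q := by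
  have hq : 0 < q := hpMin.trans_le hpMinq
  have hM : 0 ≤ M := (Real.rpow_nonneg hm _).trans hmM
  have hmMq : m ≤ M ^ q := by
    rwa [one_div, Real.rpow_inv_le_iff_of_pos hm hM hq] at hmM
  have hc_le : c ≤ c ^ (q / pMin) :=
    Real.self_le_rpow_of_one_le hc ((one_le_div hpMin).2 hpMinq)
  rw [Real.mul_rpow (by positivity) hM, ← Real.rpow_mul (by positivity), one_div_mul_eq_div]
  exact mul_le_mul hc_le hmMq hm (by positivity)

section SetLIntegral

variable {α : Type*} [MeasurableSpace α] {μ : Measure α} {A : Set α} {f : α → ℝ} {c : ℝ}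

theorem ofReal_mul_toReal_le_setLIntegral (hA : MeasurableSet A) (hAfin : μ A ≠ ∞)
    (h : ∀ x ∈ A, c ≤ f x) :
    ENNReal.ofReal (c * (μ A).toReal) ≤ ∫⁻ x in A, ENNReal.ofReal (f x) ∂μ := by
  rw [ENNReal.ofReal_mul' ENNReal.toReal_nonneg, ENNReal.ofReal_toReal hAfin,
    ← setLIntegral_const]
  exact setLIntegral_mono' hA fun x hx => ENNReal.ofReal_le_ofReal (h x hx)

theorem setLIntegral_le_ofReal_mul_toReal (hA : MeasurableSet A) (hAfin : μ A ≠ ∞)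
    (h : ∀ x ∈ A, f x ≤ c) :
    ∫⁻ x in A, ENNReal.ofReal (f x) ∂μ ≤ ENNReal.ofReal (c * (μ A).toReal) := by
  rw [ENNReal.ofReal_mul' ENNReal.toReal_nonneg, ENNReal.ofReal_toReal hAfin,
    ← setLIntegral_const]
  exact setLIntegral_mono' hA fun x hx => ENNReal.ofReal_le_ofReal (h x hx)

theorem setLIntegral_ofReal_indicator_one_div {Ω : Set α} {Φ : α → ℝ → ℝ}
    (hΩ : MeasurableSet Ω) (hA : MeasurableSet A) (hAΩ : A ⊆ Ω) (hΦ0 : ∀ x ∈ Ω, Φ x 0 = 0)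
    (l : ℝ) :
    ∫⁻ x in Ω, ENNReal.ofReal (Φ x (|A.indicator 1 x| / l)) ∂μ =
      ∫⁻ x in A, ENNReal.ofReal (Φ x (1 / l)) ∂μ := by
  have heq : EqOn (fun x => ENNReal.ofReal (Φ x (|A.indicator 1 x| / l)))
      (A.indicator fun x => ENNReal.ofReal (Φ x (1 / l))) Ω := by
    intro x hx
    by_cases hxA : x ∈ A
    · simp [hxA]
    · simp [hxA, hΦ0 x hx]
  rw [setLIntegral_congr_fun hΩ heq, lintegral_indicator hA, Measure.restrict_restrict hA,
    inter_eq_self_of_subset_left hAΩ]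

end SetLIntegral

section LuxemburgNorm

variable {n : ℕ} {Ω A : Set (EuclideanSpace ℝ (Fin n))}
  {Φ : EuclideanSpace ℝ (Fin n) → ℝ → ℝ} {p : EuclideanSpace ℝ (Fin n) → ℝ} {pMin pMax : ℝ}

theorem le_luxNorm_indicator_one (hΩ : MeasurableSet Ω) (hA : MeasurableSet A) (hAΩ : A ⊆ Ω)
    (hΦ0 : ∀ x ∈ Ω, Φ x 0 = 0) {b : ℝ≥0∞}
    (h : ∀ l, 0 < l → ∫⁻ x in A, ENNReal.ofReal (Φ x (1 / l)) ≤ 1 → b ≤ ENNReal.ofReal l) :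
    b ≤ luxNorm Ω Φ (A.indicator 1) := by
  refine le_sInf ?_
  rintro _ ⟨l, ⟨hl, hmod⟩, rfl⟩
  rw [setLIntegral_ofReal_indicator_one_div hΩ hA hAΩ hΦ0] at hmod
  exact h l hl hmod

theorem luxNorm_indicator_one_le_ofReal (hΩ : MeasurableSet Ω) (hA : MeasurableSet A)
    (hAΩ : A ⊆ Ω) (hΦ0 : ∀ x ∈ Ω, Φ x 0 = 0) {l : ℝ} (hl : 0 < l)
    (hmod : ∫⁻ x in A, ENNReal.ofReal (Φ x (1 / l)) ≤ 1) :
    luxNorm Ω Φ (A.indicator 1) ≤ ENNReal.ofReal l :=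
  sInf_le ⟨l, ⟨hl, by rwa [setLIntegral_ofReal_indicator_one_div hΩ hA hAΩ hΦ0]⟩, rfl⟩

theorem min_rpow_le_luxNorm_indicator_one (hΩ : MeasurableSet Ω) (hA : MeasurableSet A)
    (hAΩ : A ⊆ Ω) (hAfin : volume A ≠ ∞) (hΦ0 : ∀ x ∈ Ω, Φ x 0 = 0)
    (hΦ : ∀ x ∈ A, ∀ t, 0 ≤ t → t ^ p x ≤ Φ x t) (hp : ∀ x ∈ A, pMin ≤ p x ∧ p x ≤ pMax)
    (hpMin : 0 < pMin) (hpMinMax : pMin ≤ pMax) :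
    min (ENNReal.ofReal ((volume A).toReal ^ (1 / pMax)))
        (ENNReal.ofReal ((volume A).toReal ^ (1 / pMin))) ≤
      luxNorm Ω Φ (A.indicator 1) := by
  refine le_luxNorm_indicator_one hΩ hA hAΩ hΦ0 fun l hl hmod => ?_
  have hmin : min ((1 / l) ^ pMax) ((1 / l) ^ pMin) * (volume A).toReal ≤ 1 := by
    rw [← ENNReal.ofReal_le_one]
    refine le_trans (ofReal_mul_toReal_le_setLIntegral hA hAfin fun x hx => ?_) hmod
    exact (min_rpow_le_rpow_of_le_of_le (by positivity) (hp x hx).1 (hp x hx).2).trans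
      (hΦ x hx _ (by positivity))
  rcases min_choice ((1 / l) ^ pMax) ((1 / l) ^ pMin) with h | h <;> rw [h] at hmin
  · exact min_le_of_left_le <| ENNReal.ofReal_le_ofReal <|
      rpow_one_div_le_of_one_div_rpow_mul_le_one hl (hpMin.trans_le hpMinMax)
        ENNReal.toReal_nonneg hmin
  · exact min_le_of_right_le <| ENNReal.ofReal_le_ofReal <|
      rpow_one_div_le_of_one_div_rpow_mul_le_one hl hpMin ENNReal.toReal_nonneg hmin

theorem luxNorm_indicator_one_le_max_rpow (hΩ : MeasurableSet Ω) (hA : MeasurableSet A)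
    (hAΩ : A ⊆ Ω) (hA0 : volume A ≠ 0) (hAfin : volume A ≠ ∞) (hΦ0 : ∀ x ∈ Ω, Φ x 0 = 0)
    {c : ℝ} (hc : 1 ≤ c) (hΦ : ∀ x ∈ A, ∀ t, 0 ≤ t → Φ x t ≤ c * t ^ p x)
    (hp : ∀ x ∈ A, pMin ≤ p x ∧ p x ≤ pMax) (hpMin : 0 < pMin) (hpMinMax : pMin ≤ pMax) :
    luxNorm Ω Φ (A.indicator 1) ≤
      ENNReal.ofReal (c ^ (1 / pMin) *
        max ((volume A).toReal ^ (1 / pMax)) ((volume A).toReal ^ (1 / pMin))) := by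
  set m := (volume A).toReal
  have hm : 0 < m := ENNReal.toReal_pos hA0 hAfin
  set M := max (m ^ (1 / pMax)) (m ^ (1 / pMin))
  set l := c ^ (1 / pMin) * M
  have hl : 0 < l := by positivity
  refine luxNorm_indicator_one_le_ofReal hΩ hA hAΩ hΦ0 hl ?_
  obtain ⟨q, hpMinq, hmM, hmax⟩ :
      ∃ q, pMin ≤ q ∧ m ^ (1 / q) ≤ M ∧ max ((1 / l) ^ pMax) ((1 / l) ^ pMin) = (1 / l) ^ q := by
    rcases max_choice ((1 / l) ^ pMax) ((1 / l) ^ pMin) with h | h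
    · exact ⟨pMax, hpMinMax, le_max_left _ _, h⟩
    · exact ⟨pMin, le_rfl, le_max_right _ _, h⟩
  have hcm : c * (1 / l) ^ q * m ≤ 1 := by
    rw [mul_comm c, mul_assoc, one_div_rpow_mul_le_one_iff hl]
    exact mul_le_rpow_mul_rpow hc hm.le hpMin hpMinq hmM
  refine (setLIntegral_le_ofReal_mul_toReal hA hAfin fun x hx => ?_).trans
    (ENNReal.ofReal_le_one.2 hcm)
  refine (hΦ x hx _ (by positivity)).trans (mul_le_mul_of_nonneg_left ?_ (by positivity))
  exact hmax ▸ rpow_le_max_rpow_of_le_of_le (by positivity) (hp x hx).1 (hp x hx).2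

end LuxemburgNorm

section Phi2

variable {n : ℕ} {p r a : EuclideanSpace ℝ (Fin n) → ℝ} {x : EuclideanSpace ℝ (Fin n)} {t : ℝ}

theorem one_le_log_exp_one_add (ht : 0 ≤ t) : 1 ≤ Real.log (Real.exp 1 + t) :=
  (Real.le_log_iff_exp_le (by positivity)).2 (by linarith)

theorem Phi2_zero (hp : p x ≠ 0) : Phi2 p r a x 0 = 0 := by
  simp [Phi2, Real.zero_rpow hp]

theorem rpow_le_Phi2 (ha : 0 ≤ a x) (ht : 0 ≤ t) : t ^ p x ≤ Phi2 p r a x t := by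
  have hlog := one_le_log_exp_one_add ht
  have : 0 ≤ a x * t ^ p x * Real.log (Real.exp 1 + t) ^ r x := by
    have := Real.rpow_nonneg (zero_le_one.trans hlog) (r x)
    positivity
  unfold Phi2
  linarith

theorem Phi2_le {S : ℝ} (ha : 0 ≤ a x) (haS : a x ≤ S) (hr : r x ≤ 0) (ht : 0 ≤ t) :
    Phi2 p r a x t ≤ (1 + S) * t ^ p x := by
  have hlog : Real.log (Real.exp 1 + t) ^ r x ≤ 1 :=
    Real.rpow_le_one_of_one_le_of_nonpos (one_le_log_exp_one_add ht) hr
  have htp : 0 ≤ t ^ p x := Real.rpow_nonneg ht _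
  have : a x * t ^ p x * Real.log (Real.exp 1 + t) ^ r x ≤ S * t ^ p x :=
    calc a x * t ^ p x * Real.log (Real.exp 1 + t) ^ r x ≤ a x * t ^ p x :=
          mul_le_of_le_one_right (by positivity) hlog
      _ ≤ S * t ^ p x := mul_le_mul_of_nonneg_right haS htp
  unfold Phi2
  linarith

end Phi2

theorem stmt_13_general {n : ℕ}
    (Ω : Set (EuclideanSpace ℝ (Fin n))) (hΩm : MeasurableSet Ω)
    (p r a : EuclideanSpace ℝ (Fin n) → ℝ)
    (hp1 : ∀ x ∈ Ω, 1 ≤ p x) (hpB : BddAbove (p '' Ω))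
    (hr0 : ∀ x ∈ Ω, r x < 0)
    (ha0 : ∀ x ∈ Ω, 0 ≤ a x) (haB : BddAbove (a '' Ω)) :
    ∀ A : Set (EuclideanSpace ℝ (Fin n)), A ⊆ Ω → MeasurableSet A →
      0 < volume A → volume A < ⊤ →
      min (ENNReal.ofReal ((volume A).toReal ^ (1 / sSup (p '' A))))
          (ENNReal.ofReal ((volume A).toReal ^ (1 / sInf (p '' A)))) ≤
        luxNorm Ω (Phi2 p r a) (A.indicator 1) ∧
      luxNorm Ω (Phi2 p r a) (A.indicator 1) ≤
        ENNReal.ofReal (2 * (1 + sSup (a '' Ω)) ^ (1 / sInf (p '' A)) *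
          max ((volume A).toReal ^ (1 / sSup (p '' A)))
              ((volume A).toReal ^ (1 / sInf (p '' A)))) := by
  intro A hAΩ hA hA0 hAfin
  obtain ⟨x₀, hx₀⟩ := nonempty_of_measure_ne_zero hA0.ne'
  have hp1A : ∀ y ∈ p '' A, 1 ≤ y := forall_mem_image.2 fun x hx => hp1 x (hAΩ hx)
  have hpA : ∀ x ∈ A, sInf (p '' A) ≤ p x ∧ p x ≤ sSup (p '' A) := fun x hx =>
    ⟨csInf_le ⟨1, hp1A⟩ (mem_image_of_mem p hx),
      le_csSup (hpB.mono (image_mono hAΩ)) (mem_image_of_mem p hx)⟩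
  have hpMin : 1 ≤ sInf (p '' A) := le_csInf ⟨p x₀, mem_image_of_mem p hx₀⟩ hp1A
  have hpMinMax := (hpA x₀ hx₀).1.trans (hpA x₀ hx₀).2
  have haS : ∀ x ∈ Ω, a x ≤ sSup (a '' Ω) := fun x hx => le_csSup haB (mem_image_of_mem a hx)
  have hc : 1 ≤ 1 + sSup (a '' Ω) := by linarith [ha0 x₀ (hAΩ hx₀), haS x₀ (hAΩ hx₀)]
  have hΦ0 : ∀ x ∈ Ω, Phi2 p r a x 0 = 0 := fun x hx => Phi2_zero (by linarith [hp1 x hx])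
  refine ⟨min_rpow_le_luxNorm_indicator_one hΩm hA hAΩ hAfin.ne hΦ0
    (fun x hx _ ht => rpow_le_Phi2 (ha0 x (hAΩ hx)) ht) hpA (by linarith) hpMinMax, ?_⟩
  refine (luxNorm_indicator_one_le_max_rpow hΩm hA hAΩ hA0.ne' hAfin.ne hΦ0 hc
    (fun x hx _ ht => Phi2_le (ha0 x (hAΩ hx)) (haS x (hAΩ hx)) (hr0 x (hAΩ hx)).le ht)
    hpA (by linarith) hpMinMax).trans (ENNReal.ofReal_le_ofReal ?_)
  have : 0 ≤ (1 + sSup (a '' Ω)) ^ (1 / sInf (p '' A)) *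
      max ((volume A).toReal ^ (1 / sSup (p '' A))) ((volume A).toReal ^ (1 / sInf (p '' A))) := by
    positivity
  linarith

/-- two-sided estimate for the Luxemburg norm of an indicator when
`r < 0` everywhere:
`min{|A|^{1/p⁺_A}, |A|^{1/p⁻_A}} ≤ ‖1_A‖_{L^Φ(Ω)} ≤ 2(1+‖a‖_∞)^{1/p⁻_A} ·
max{|A|^{1/p⁺_A}, |A|^{1/p⁻_A}}`. -/
theorem stmt_13 {n : ℕ}
    (Ω : Set (EuclideanSpace ℝ (Fin n))) (hΩm : MeasurableSet Ω)
    (p r a : EuclideanSpace ℝ (Fin n) → ℝ)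
    (hpm : Measurable p) (hp1 : ∀ x ∈ Ω, 1 ≤ p x) (hpB : BddAbove (p '' Ω))
    (hrm : Measurable r) (hr0 : ∀ x ∈ Ω, r x < 0)
    (hrB : BddAbove (r '' Ω)) (hrb : BddBelow (r '' Ω))
    (ham : Measurable a) (ha0 : ∀ x ∈ Ω, 0 ≤ a x) (haB : BddAbove (a '' Ω)) :
    ∀ A : Set (EuclideanSpace ℝ (Fin n)), A ⊆ Ω → MeasurableSet A →
      0 < volume A → volume A < ⊤ →
      min (ENNReal.ofReal ((volume A).toReal ^ (1 / sSup (p '' A))))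
          (ENNReal.ofReal ((volume A).toReal ^ (1 / sInf (p '' A)))) ≤
        luxNorm Ω (Phi2 p r a) (A.indicator 1) ∧
      luxNorm Ω (Phi2 p r a) (A.indicator 1) ≤
        ENNReal.ofReal (2 * (1 + sSup (a '' Ω)) ^ (1 / sInf (p '' A)) *
          max ((volume A).toReal ^ (1 / sSup (p '' A)))
              ((volume A).toReal ^ (1 / sInf (p '' A)))) :=
  stmt_13_general Ω hΩm p r a hp1 hpB hr0 ha0 haB
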